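/- Let X = {0,1}^ℤ be the full 2-shift, X̂ the associated Kalikow-type subshift, and for p ∈ (0,1) let μ_p = (B_p × B_{1/2}) ∘ π^{−1}, where B_p is the Bernoulli(p,1−p) product measure on {−1,1}^ℤ (P(w_j = +1) = p) and B_{1/2} is the Bernoulli(1/2,1/2) product measure on {0,1}^ℤ. Then the Kolmogorov–Sinai entropy of the shift on X̂ with respect to μ_p equals |2p−1|·log 2 + H(p), where H(p) = −p log p − (1−p) log(1−p). -/

import Mathlib

/-!
A length-`n` cylinder of `μ_p` is given by signs `ε ∈ {±1}ⁿ` and colours `b ∈ {0,1}ⁿ`. Its measure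
vanishes unless `b` is constant on the fibres of the walk `k ↦ ε₀ + ⋯ + ε_{k-1}`, and then equals
`P_p(ε) · 2^{-R(ε)}`, where `R(ε)` is the number of sites the walk visits. Summing `-x log x` over
the `2^{R(ε)}` admissible colourings gives `n H(p) + log 2 · E R_n` for the entropy of the
cylinder partition, so it remains to show `E R_n / n → |2p - 1|`. From below, `R_n > |S_{n-1}|`.
From above, cut the walk into blocks of length `L`: then `R_n ≤ Σ |block increments| + 2L + 1`,
and by the second-moment bound each increment has mean absolute value at most `L |2p-1| + √L`.
-/

open MeasureTheory Filter

namespace PaperStmt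

noncomputable def walk (w : ℤ → ℤ) (n : ℤ) : ℤ :=
  if 0 ≤ n then ∑ j ∈ Finset.Ico (0 : ℤ) n, w j else -∑ j ∈ Finset.Ico n (0 : ℤ), w j

noncomputable def kalikowPi {A : Type*} (w : ℤ → ℤ) (y : ℤ → A) : ℤ → ℤ × A :=
  fun n => (w n, y (walk w n))

def wordCyl {A : Type*} {n : ℕ} (a : Fin n → A) : Set (ℤ → A) :=
  {x | ∀ i : Fin n, x ((i : ℕ) : ℤ) = a i}

noncomputable section

def stepWeight (p : ℝ) (x : ℤ) : ℝ := if x = 1 then p else 1 - p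

def signWords (n : ℕ) : Finset (Fin n → ℤ) := Fintype.piFinset fun _ => {1, -1}

def wordWeight (p : ℝ) {n : ℕ} (ε : Fin n → ℤ) : ℝ := ∏ i, stepWeight p (ε i)

def wordExpect (p : ℝ) (n : ℕ) (f : (Fin n → ℤ) → ℝ) : ℝ :=
  ∑ ε ∈ signWords n, wordWeight p ε * f ε

section WordExpect

variable {p : ℝ} {n : ℕ}

lemma mem_signWords {ε : Fin n → ℤ} : ε ∈ signWords n ↔ ∀ i, ε i = 1 ∨ ε i = -1 := by
  simp [signWords]

lemma stepWeight_pos (hp0 : 0 < p) (hp1 : p < 1) (x : ℤ) : 0 < stepWeight p x := by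
  unfold stepWeight; split <;> linarith

lemma wordWeight_pos (hp0 : 0 < p) (hp1 : p < 1) (ε : Fin n → ℤ) : 0 < wordWeight p ε :=
  Finset.prod_pos fun _ _ => stepWeight_pos hp0 hp1 _

lemma wordExpect_add (f g : (Fin n → ℤ) → ℝ) :
    wordExpect p n (fun ε => f ε + g ε) = wordExpect p n f + wordExpect p n g := by
  simp only [wordExpect, mul_add, Finset.sum_add_distrib]

lemma wordExpect_const_mul (c : ℝ) (f : (Fin n → ℤ) → ℝ) :
    wordExpect p n (fun ε => c * f ε) = c * wordExpect p n f := by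
  simp only [wordExpect, Finset.mul_sum, mul_left_comm]

lemma wordExpect_sum {ι : Type*} (s : Finset ι) (f : ι → (Fin n → ℤ) → ℝ) :
    wordExpect p n (fun ε => ∑ i ∈ s, f i ε) = ∑ i ∈ s, wordExpect p n (f i) := by
  simp only [wordExpect, Finset.mul_sum]
  exact Finset.sum_comm

lemma wordExpect_mono (hp0 : 0 < p) (hp1 : p < 1) {f g : (Fin n → ℤ) → ℝ}
    (h : ∀ ε ∈ signWords n, f ε ≤ g ε) : wordExpect p n f ≤ wordExpect p n g :=
  Finset.sum_le_sum fun ε hε => mul_le_mul_of_nonneg_left (h ε hε) (wordWeight_pos hp0 hp1 ε).le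

lemma abs_wordExpect_le (hp0 : 0 < p) (hp1 : p < 1) (f : (Fin n → ℤ) → ℝ) :
    |wordExpect p n f| ≤ wordExpect p n fun ε => |f ε| := by
  refine (Finset.abs_sum_le_sum_abs _ _).trans_eq (Finset.sum_congr rfl fun ε _ => ?_)
  rw [abs_mul, abs_of_pos (wordWeight_pos hp0 hp1 ε)]

lemma wordExpect_prod (g : Fin n → ℤ → ℝ) :
    wordExpect p n (fun ε => ∏ i, g i (ε i)) = ∏ i, (p * g i 1 + (1 - p) * g i (-1)) := by
  have hi : ∀ i, p * g i 1 + (1 - p) * g i (-1) =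
      ∑ x ∈ ({1, -1} : Finset ℤ), stepWeight p x * g i x := fun i => by
    rw [Finset.sum_pair (by decide)]
    simp [stepWeight]
  simp_rw [hi, Finset.prod_univ_sum, wordExpect, wordWeight, signWords, ← Finset.prod_mul_distrib]

lemma wordExpect_const (c : ℝ) : wordExpect p n (fun _ => c) = c := by
  have h := wordExpect_prod (p := p) (n := n) fun _ _ => 1
  simp only [Finset.prod_const_one, mul_one, add_sub_cancel] at h
  simpa [h] using wordExpect_const_mul (p := p) (n := n) c fun _ => 1

lemma wordExpect_apply (i : Fin n) (c : ℤ → ℝ) :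
    wordExpect p n (fun ε => c (ε i)) = p * c 1 + (1 - p) * c (-1) := by
  have h := wordExpect_prod (p := p) (n := n) fun k x => if k = i then c x else 1
  rw [Fintype.prod_eq_single i fun k hk => by simp [hk]] at h
  simpa [Fintype.prod_ite_eq'] using h

lemma wordExpect_apply_mul_apply {i j : Fin n} (hij : i ≠ j) (c d : ℤ → ℝ) :
    wordExpect p n (fun ε => c (ε i) * d (ε j)) =
      (p * c 1 + (1 - p) * c (-1)) * (p * d 1 + (1 - p) * d (-1)) := by
  have hprod : ∀ {g : Fin n → ℝ}, (∀ k, k ≠ i ∧ k ≠ j → g k = 1) → ∏ k, g k = g i * g j :=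
    fun h => Fintype.prod_eq_mul i j hij h
  convert wordExpect_prod (p := p) (n := n)
    (fun k x => if k = i then c x else if k = j then d x else 1) using 1
  · congr 1
    funext ε
    rw [hprod fun k hk => by simp [hk.1, hk.2]]
    simp [hij.symm]
  · rw [hprod fun k hk => by simp [hk.1, hk.2]]
    simp [hij.symm]

lemma wordExpect_abs_le_sqrt (hp0 : 0 < p) (hp1 : p < 1) (f : (Fin n → ℤ) → ℝ) :
    wordExpect p n (fun ε => |f ε|) ≤ √(wordExpect p n fun ε => f ε ^ 2) := by
  have hw := fun ε => (wordWeight_pos (n := n) hp0 hp1 ε).le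
  have h := Real.sum_sqrt_mul_sqrt_le (signWords n) hw (g := fun ε => wordWeight p ε * f ε ^ 2)
    fun ε => mul_nonneg (hw ε) (sq_nonneg _)
  have h1 : ∑ ε ∈ signWords n, wordWeight p ε = 1 := by
    simpa [wordExpect] using wordExpect_const (p := p) (n := n) 1
  rw [h1, Real.sqrt_one, one_mul] at h
  refine le_trans (le_of_eq (Finset.sum_congr rfl fun ε _ => ?_)) h
  rw [Real.sqrt_mul (hw ε), Real.sqrt_sq_eq_abs, ← mul_assoc, Real.mul_self_sqrt (hw ε)]

end WordExpect

section LazyPath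

variable {S : ℕ → ℤ}

lemma abs_sub_le_of_abs_succ_sub_le (hS : ∀ k, |S (k + 1) - S k| ≤ 1) {a b : ℕ} (hab : a ≤ b) :
    |S b - S a| ≤ b - a := by
  induction b, hab using Nat.le_induction with
  | base => simp
  | succ b _ ih =>
    calc |S (b + 1) - S a| ≤ |S (b + 1) - S b| + |S b - S a| := abs_sub_le _ _ _
      _ ≤ (b + 1 : ℕ) - a := by push_cast; linarith [hS b]

lemma exists_eq_of_mem_uIcc (hS : ∀ k, |S (k + 1) - S k| ≤ 1) (k : ℕ) {z : ℤ}
    (hz : z ∈ Finset.uIcc (S 0) (S k)) : ∃ j ≤ k, S j = z := by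
  induction k with
  | zero => exact ⟨0, le_rfl, (by simpa using hz : z = S 0).symm⟩
  | succ k ih =>
    by_cases h : z ∈ Finset.uIcc (S 0) (S k)
    · obtain ⟨j, hj, rfl⟩ := ih h
      exact ⟨j, by omega, rfl⟩
    · refine ⟨k + 1, le_rfl, ?_⟩
      have := abs_le.1 (hS k)
      simp only [Finset.mem_uIcc] at hz h
      omega

lemma abs_sub_lt_card_image_range (hS : ∀ k, |S (k + 1) - S k| ≤ 1) (k : ℕ) :
    |S k - S 0| < ((Finset.range (k + 1)).image S).card := by
  have hsub : Finset.uIcc (S 0) (S k) ⊆ (Finset.range (k + 1)).image S := fun z hz => by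
    obtain ⟨j, hj, rfl⟩ := exists_eq_of_mem_uIcc hS k hz
    exact Finset.mem_image_of_mem S (Finset.mem_range.2 (by omega))
  have hcard := Finset.card_le_card hsub
  rw [Int.card_uIcc] at hcard
  rw [Int.abs_eq_natAbs]
  omega

lemma sum_range_mem_Icc {G : Type*} [AddCommGroup G] [LinearOrder G] [IsOrderedAddMonoid G]
    (D : ℕ → G) {t B : ℕ} (htB : t ≤ B) :
    ∑ j ∈ Finset.range t, D j ∈
      Set.Icc (-∑ j ∈ Finset.range B, (D j)⁻) (∑ j ∈ Finset.range B, (D j)⁺) := by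
  have hsub := Finset.range_subset_range.2 htB
  constructor
  · calc -∑ j ∈ Finset.range B, (D j)⁻ ≤ -∑ j ∈ Finset.range t, (D j)⁻ :=
          neg_le_neg (Finset.sum_le_sum_of_subset_of_nonneg hsub fun _ _ _ => negPart_nonneg _)
      _ ≤ ∑ j ∈ Finset.range t, D j := by
          rw [← Finset.sum_neg_distrib]
          exact Finset.sum_le_sum fun j _ => neg_le.1 (neg_le_negPart _)
  · calc ∑ j ∈ Finset.range t, D j ≤ ∑ j ∈ Finset.range t, (D j)⁺ :=
          Finset.sum_le_sum fun j _ => le_posPart _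
      _ ≤ ∑ j ∈ Finset.range B, (D j)⁺ :=
          Finset.sum_le_sum_of_subset_of_nonneg hsub fun _ _ _ => posPart_nonneg _

lemma card_image_range_le (hS : ∀ k, |S (k + 1) - S k| ≤ 1) {L : ℕ} (hL : 0 < L) (n : ℕ) :
    (((Finset.range n).image S).card : ℤ) ≤
      ∑ j ∈ Finset.range ((n - 1) / L), |S ((j + 1) * L) - S (j * L)| + 2 * L + 1 := by
  set B := (n - 1) / L
  set D : ℕ → ℤ := fun j => S ((j + 1) * L) - S (j * L)
  -- each `S k` is within `L` of the block endpoint `S (k / L * L)`, and the block endpoints lie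
  -- between `S 0 - Σ D⁻` and `S 0 + Σ D⁺`
  have hsub : (Finset.range n).image S ⊆ Finset.Icc (S 0 - ∑ j ∈ Finset.range B, (D j)⁻ - L)
      (S 0 + ∑ j ∈ Finset.range B, (D j)⁺ + L) := by
    intro z hz
    obtain ⟨k, hk, rfl⟩ := Finset.mem_image.1 hz
    rw [Finset.mem_range] at hk
    set m := k / L * L with hm
    have hmk : m ≤ k := Nat.div_mul_le_self k L
    have hkm : k < m + L := by
      have := Nat.div_add_mod' k L
      have := Nat.mod_lt k hL
      omega
    have hclose := abs_le.1 (abs_sub_le_of_abs_succ_sub_le hS hmk)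
    have htele : S m - S 0 = ∑ j ∈ Finset.range (k / L), D j := by
      rw [Finset.sum_range_sub (fun j => S (j * L))]
      simp [hm]
    have htB : k / L ≤ B := Nat.div_le_div_right (by omega)
    have hcoarse := sum_range_mem_Icc D htB
    rw [← htele, Set.mem_Icc] at hcoarse
    rw [Finset.mem_Icc]
    constructor <;> omega
  have hcard := Finset.card_le_card hsub
  have hparts : ∑ j ∈ Finset.range B, |D j| =
      ∑ j ∈ Finset.range B, (D j)⁺ + ∑ j ∈ Finset.range B, (D j)⁻ := by
    rw [← Finset.sum_add_distrib]
    exact Finset.sum_congr rfl fun j _ => (posPart_add_negPart _).symm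
  rw [Int.card_Icc] at hcard
  have hnn : 0 ≤ ∑ j ∈ Finset.range B, (D j)⁺ + ∑ j ∈ Finset.range B, (D j)⁻ :=
    add_nonneg (Finset.sum_nonneg fun _ _ => posPart_nonneg _)
      (Finset.sum_nonneg fun _ _ => negPart_nonneg _)
  show _ ≤ ∑ j ∈ Finset.range B, |D j| + 2 * L + 1
  omega

end LazyPath

def stepSeq {n : ℕ} (ε : Fin n → ℤ) (j : ℕ) : ℤ := if h : j < n then ε ⟨j, h⟩ else 0

def wordWalk {n : ℕ} (ε : Fin n → ℤ) (k : ℕ) : ℤ := ∑ j ∈ Finset.range k, stepSeq ε j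

def walkRange {n : ℕ} (ε : Fin n → ℤ) : ℕ := ((Finset.range n).image (wordWalk ε)).card

def expectedRange (p : ℝ) (n : ℕ) : ℝ := wordExpect p n fun ε => walkRange ε

section ExpectedRange

variable {p : ℝ} {n : ℕ}

lemma stepSeq_of_lt (ε : Fin n → ℤ) {j : ℕ} (hj : j < n) : stepSeq ε j = ε ⟨j, hj⟩ := dif_pos hj

lemma abs_wordWalk_succ_sub_le {ε : Fin n → ℤ} (hε : ε ∈ signWords n) (k : ℕ) :
    |wordWalk ε (k + 1) - wordWalk ε k| ≤ 1 := by
  rw [wordWalk, wordWalk, Finset.sum_range_succ, add_sub_cancel_left, stepSeq]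
  split_ifs with h
  · rcases mem_signWords.1 hε ⟨k, h⟩ with h1 | h1 <;> simp [h1]
  · simp

lemma wordWalk_sub_wordWalk (ε : Fin n → ℤ) {a b : ℕ} (hab : a ≤ b) :
    wordWalk ε b - wordWalk ε a = ∑ t ∈ Finset.Ico a b, stepSeq ε t :=
  (Finset.sum_Ico_eq_sub _ hab).symm

lemma wordExpect_centered_stepSeq_mul {t t' : ℕ} (ht : t < n) (ht' : t' < n) :
    wordExpect p n (fun ε => ((stepSeq ε t : ℝ) - (2 * p - 1)) * ((stepSeq ε t' : ℝ) - (2 * p - 1)))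
      = if t = t' then 4 * p * (1 - p) else 0 := by
  simp only [stepSeq_of_lt _ ht, stepSeq_of_lt _ ht']
  split_ifs with h
  · subst h
    refine (wordExpect_apply ⟨t, ht⟩
      fun x => ((x : ℝ) - (2 * p - 1)) * ((x : ℝ) - (2 * p - 1))).trans ?_
    push_cast
    ring
  · refine (wordExpect_apply_mul_apply (i := ⟨t, ht⟩) (j := ⟨t', ht'⟩) (by simpa using h)
      (fun x => (x : ℝ) - (2 * p - 1)) fun x => (x : ℝ) - (2 * p - 1)).trans ?_
    push_cast
    ring

lemma wordExpect_sq_sum_centered_stepSeq {I : Finset ℕ} (hI : ∀ t ∈ I, t < n) :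
    wordExpect p n (fun ε => (∑ t ∈ I, ((stepSeq ε t : ℝ) - (2 * p - 1))) ^ 2)
      = I.card * (4 * p * (1 - p)) := by
  simp only [sq, Finset.sum_mul_sum]
  rw [wordExpect_sum]
  simp only [wordExpect_sum]
  rw [Finset.sum_congr rfl fun t ht => Finset.sum_congr rfl fun t' ht' =>
    wordExpect_centered_stepSeq_mul (hI t ht) (hI t' ht')]
  simp [Finset.sum_ite_eq]

lemma wordExpect_abs_wordWalk_sub_le (hp0 : 0 < p) (hp1 : p < 1) {a b : ℕ} (hab : a ≤ b)
    (hb : b ≤ n) :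
    wordExpect p n (fun ε => |(wordWalk ε b : ℝ) - wordWalk ε a|)
      ≤ (b - a : ℕ) * |2 * p - 1| + √(b - a : ℕ) := by
  set m := 2 * p - 1
  have hsplit : ∀ ε : Fin n → ℤ, |(wordWalk ε b : ℝ) - wordWalk ε a|
      ≤ |∑ t ∈ Finset.Ico a b, ((stepSeq ε t : ℝ) - m)| + (b - a : ℕ) * |m| := fun ε => by
    rw [← Int.cast_sub, wordWalk_sub_wordWalk ε hab, Int.cast_sum, ← Nat.card_Ico a b,
      ← abs_of_nonneg (Nat.cast_nonneg (α := ℝ) _), ← abs_mul]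
    refine le_of_eq_of_le ?_ (abs_add_le _ _)
    simp [Finset.sum_sub_distrib]
  have hvar := wordExpect_sq_sum_centered_stepSeq (p := p) (n := n) (I := Finset.Ico a b)
    fun t ht => by have := (Finset.mem_Ico.1 ht).2; omega
  rw [Nat.card_Ico] at hvar
  calc _ ≤ wordExpect p n (fun ε => |∑ t ∈ Finset.Ico a b, ((stepSeq ε t : ℝ) - m)| +
        (b - a : ℕ) * |m|) := wordExpect_mono hp0 hp1 fun ε _ => hsplit ε
    _ ≤ √((b - a : ℕ) * (4 * p * (1 - p))) + (b - a : ℕ) * |m| := by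
        rw [wordExpect_add, wordExpect_const, ← hvar]
        gcongr
        exact wordExpect_abs_le_sqrt hp0 hp1 _
    _ ≤ _ := by
        rw [add_comm]
        gcongr
        nlinarith [sq_nonneg (2 * p - 1), Nat.cast_nonneg (α := ℝ) (b - a)]

lemma wordExpect_wordWalk {k : ℕ} (hk : k ≤ n) :
    wordExpect p n (fun ε => (wordWalk ε k : ℝ)) = k * (2 * p - 1) := by
  simp only [wordWalk, Int.cast_sum]
  rw [wordExpect_sum, Finset.sum_congr rfl fun j hj => ?_, Finset.sum_const, Finset.card_range,
    nsmul_eq_mul]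
  have hjn : j < n := (Finset.mem_range.1 hj).trans_le hk
  simp only [stepSeq_of_lt _ hjn]
  refine (wordExpect_apply ⟨j, hjn⟩ fun x => (x : ℝ)).trans ?_
  push_cast
  ring

lemma expectedRange_ge (hp0 : 0 < p) (hp1 : p < 1) (hn : 1 ≤ n) :
    ((n - 1 : ℕ) : ℝ) * |2 * p - 1| ≤ expectedRange p n := by
  calc ((n - 1 : ℕ) : ℝ) * |2 * p - 1| = |wordExpect p n fun ε => (wordWalk ε (n - 1) : ℝ)| := by
        rw [wordExpect_wordWalk (by omega), abs_mul, Nat.abs_cast]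
    _ ≤ wordExpect p n fun ε => |(wordWalk ε (n - 1) : ℝ)| := abs_wordExpect_le hp0 hp1 _
    _ ≤ expectedRange p n := wordExpect_mono hp0 hp1 fun ε hε => by
        have h := abs_sub_lt_card_image_range (abs_wordWalk_succ_sub_le hε) (n - 1)
        have h0 : wordWalk ε 0 = 0 := Finset.sum_range_zero _
        rw [Nat.sub_add_cancel hn, h0, sub_zero] at h
        rw [walkRange]
        exact_mod_cast h.le

lemma expectedRange_le (hp0 : 0 < p) (hp1 : p < 1) {L : ℕ} (hL : 0 < L) :
    expectedRange p n ≤ n * |2 * p - 1| + n / √L + (2 * L + 1) := by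
  set B := (n - 1) / L
  have hBL : B * L ≤ n := (Nat.div_mul_le_self _ _).trans (Nat.sub_le n 1)
  have hblock : ∀ j ∈ Finset.range B, (j + 1) * L ≤ n := fun j hj =>
    (Nat.mul_le_mul_right L (Finset.mem_range.1 hj)).trans hBL
  have hsL : 0 < √(L : ℝ) := Real.sqrt_pos.2 (by exact_mod_cast hL)
  calc expectedRange p n ≤ wordExpect p n (fun ε =>
        ∑ j ∈ Finset.range B, |(wordWalk ε ((j + 1) * L) : ℝ) - wordWalk ε (j * L)| +
          (2 * L + 1)) :=
        wordExpect_mono hp0 hp1 fun ε hε => by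
          have h := Int.cast_le (R := ℝ).2 (card_image_range_le (abs_wordWalk_succ_sub_le hε) hL n)
          push_cast at h
          rw [walkRange, ← add_assoc]
          exact h
    _ = ∑ j ∈ Finset.range B, wordExpect p n (fun ε =>
          |(wordWalk ε ((j + 1) * L) : ℝ) - wordWalk ε (j * L)|) + (2 * L + 1) := by
        rw [wordExpect_add, wordExpect_sum, wordExpect_const]
    _ ≤ ∑ _j ∈ Finset.range B, (L * |2 * p - 1| + √L) + (2 * L + 1) := by
        gcongr with j hj
        have h := wordExpect_abs_wordWalk_sub_le hp0 hp1
          (Nat.mul_le_mul_right L (Nat.le_add_right j 1)) (hblock j hj)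
        simpa only [add_one_mul, Nat.add_sub_cancel_left] using h
    _ = (B * L : ℕ) * |2 * p - 1| + (B * L : ℕ) / √L + (2 * L + 1) := by
        rw [Finset.sum_const, Finset.card_range, nsmul_eq_mul, Nat.cast_mul, mul_div_assoc,
          Real.div_sqrt]
        ring
    _ ≤ n * |2 * p - 1| + n / √L + (2 * L + 1) := by
        have : ((B * L : ℕ) : ℝ) ≤ n := by exact_mod_cast hBL
        gcongr

theorem tendsto_expectedRange_div (hp0 : 0 < p) (hp1 : p < 1) :
    Tendsto (fun n : ℕ => expectedRange p n / n) atTop (nhds |2 * p - 1|) := by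
  set m := |2 * p - 1|
  rw [tendsto_order]
  refine ⟨fun a ha => ?_, fun a ha => ?_⟩
  · have hlim : Tendsto (fun n : ℕ => m - m / n) atTop (nhds m) := by
      simpa using tendsto_const_nhds.sub (tendsto_const_div_atTop_nhds_zero_nat m)
    filter_upwards [hlim.eventually (lt_mem_nhds ha), eventually_ge_atTop 1] with n h hn
    refine h.trans_le ?_
    have hn' : (0 : ℝ) < n := by exact_mod_cast hn
    rw [le_div_iff₀ hn', sub_mul, div_mul_cancel₀ _ hn'.ne']
    have := expectedRange_ge (p := p) hp0 hp1 hn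
    push_cast [hn] at this
    linarith
  · have hsqrt : Tendsto (fun L : ℕ => 1 / √(L : ℝ)) atTop (nhds 0) := by
      simp only [one_div]
      exact tendsto_inv_atTop_zero.comp (Real.tendsto_sqrt_atTop.comp tendsto_natCast_atTop_atTop)
    obtain ⟨L, hLa, hL⟩ := ((hsqrt.eventually (gt_mem_nhds (sub_pos.2 ha))).and
      (eventually_gt_atTop 0)).exists
    have hlim : Tendsto (fun n : ℕ => m + 1 / √(L : ℝ) + (2 * L + 1) / n) atTop
        (nhds (m + 1 / √(L : ℝ))) := by
      simpa using tendsto_const_nhds.add (tendsto_const_div_atTop_nhds_zero_nat (2 * L + 1 : ℝ))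
    filter_upwards [hlim.eventually (gt_mem_nhds (show m + 1 / √(L : ℝ) < a by linarith)),
      eventually_ge_atTop 1]
      with n h hn
    refine lt_of_le_of_lt ?_ h
    have hn' : (0 : ℝ) < n := by exact_mod_cast hn
    rw [div_le_iff₀ hn']
    have := expectedRange_le (n := n) hp0 hp1 hL
    calc expectedRange p n ≤ n * m + n / √L + (2 * L + 1) := this
      _ = _ := by field_simp

end ExpectedRange

section KalikowPi

variable {A : Type*} {n : ℕ}

lemma walk_natCast (w : ℤ → ℤ) (k : ℕ) : walk w k = ∑ j ∈ Finset.range k, w j := by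
  simp [walk, Int.Ico_eq_finset_map, Finset.sum_map]

lemma walk_natCast_eq_wordWalk {w : ℤ → ℤ} {ε : Fin n → ℤ} (hw : ∀ i : Fin n, w i = ε i) {k : ℕ}
    (hk : k ≤ n) : walk w k = wordWalk ε k := by
  rw [walk_natCast, wordWalk]
  refine Finset.sum_congr rfl fun j hj => ?_
  have hjn : j < n := (Finset.mem_range.1 hj).trans_le hk
  rw [stepSeq_of_lt _ hjn]
  exact hw ⟨j, hjn⟩

lemma kalikowPi_mem_wordCyl_iff {w : ℤ → ℤ} {y : ℤ → A} {ε : Fin n → ℤ} {b : Fin n → A} :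
    kalikowPi w y ∈ wordCyl (fun i => (ε i, b i)) ↔
      (∀ i : Fin n, w i = ε i) ∧ ∀ i : Fin n, y (wordWalk ε i) = b i := by
  simp only [wordCyl, kalikowPi, Set.mem_ofPred_eq, Prod.mk.injEq, forall_and]
  refine and_congr_right fun hw => forall_congr' fun i => ?_
  rw [walk_natCast_eq_wordWalk hw i.isLt.le]

end KalikowPi

def kalikowMeasure {A : Type*} [MeasurableSpace A] (Bp : Measure (ℤ → ℤ)) (Bh : Measure (ℤ → A)) :
    Measure (ℤ → ℤ × A) :=
  (Bp.prod Bh).map fun q => kalikowPi q.1 q.2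

section KalikowMeasure

variable {A : Type*} [MeasurableSpace A] {n : ℕ}

lemma measurable_walk (k : ℤ) : Measurable fun w : ℤ → ℤ => walk w k := by
  unfold walk
  split_ifs
  · exact Finset.measurable_sum _ fun j _ => measurable_pi_apply j
  · exact (Finset.measurable_sum _ fun j _ => measurable_pi_apply j).neg

lemma measurable_kalikowPi : Measurable fun q : (ℤ → ℤ) × (ℤ → A) => kalikowPi q.1 q.2 := by
  have heval : Measurable fun zy : ℤ × (ℤ → A) => zy.2 zy.1 :=
    measurable_from_prod_countable_right fun z => measurable_pi_apply z
  refine measurable_pi_lambda _ fun k => ?_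
  exact ((measurable_pi_apply k).comp measurable_fst).prodMk
    (heval.comp (((measurable_walk k).comp measurable_fst).prodMk measurable_snd))

lemma measurableSet_wordCyl [MeasurableSingletonClass A] (a : Fin n → A) :
    MeasurableSet (wordCyl a) := by
  have : wordCyl a = ⋂ i : Fin n, (fun x : ℤ → A => x i) ⁻¹' {a i} := by
    ext x
    simp [wordCyl]
  rw [this]
  exact MeasurableSet.iInter fun i => measurable_pi_apply _ (measurableSet_singleton _)

lemma kalikowMeasure_apply_wordCyl [MeasurableSingletonClass A] (Bp : Measure (ℤ → ℤ))
    (Bh : Measure (ℤ → A)) (a : Fin n → ℤ × A) :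
    kalikowMeasure Bp Bh (wordCyl a) =
      Bp.prod Bh ((fun q : (ℤ → ℤ) × (ℤ → A) => kalikowPi q.1 q.2) ⁻¹' wordCyl a) :=
  Measure.map_apply measurable_kalikowPi (measurableSet_wordCyl a)

lemma kalikowMeasure_wordCyl_of_notMem_signWords [MeasurableSingletonClass A]
    {Bp : Measure (ℤ → ℤ)} (Bh : Measure (ℤ → A)) [SFinite Bh]
    (hG : ∀ᵐ w ∂Bp, ∀ j : ℤ, w j = 1 ∨ w j = -1) {ε : Fin n → ℤ} (hε : ε ∉ signWords n)
    (b : Fin n → A) : kalikowMeasure Bp Bh (wordCyl fun i => (ε i, b i)) = 0 := by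
  rw [kalikowMeasure_apply_wordCyl]
  refine measure_mono_null (t := {w | ¬ ∀ j : ℤ, w j = 1 ∨ w j = -1} ×ˢ Set.univ) ?_ ?_
  · rintro ⟨w, y⟩ hq
    obtain ⟨hw, -⟩ := kalikowPi_mem_wordCyl_iff.1 hq
    exact ⟨fun hG => hε (mem_signWords.2 fun i => hw i ▸ hG i), trivial⟩
  · rw [Measure.prod_prod, ae_iff.1 hG, zero_mul]

lemma kalikowMeasure_wordCyl_of_not_factorsThrough [MeasurableSingletonClass A]
    (Bp : Measure (ℤ → ℤ)) (Bh : Measure (ℤ → A)) {ε : Fin n → ℤ} {b : Fin n → A}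
    (hb : ¬ b.FactorsThrough fun i : Fin n => wordWalk ε i) :
    kalikowMeasure Bp Bh (wordCyl fun i => (ε i, b i)) = 0 := by
  rw [kalikowMeasure_apply_wordCyl]
  convert measure_empty (μ := Bp.prod Bh)
  refine Set.eq_empty_of_forall_notMem fun q hq => hb fun i i' hii' => ?_
  obtain ⟨-, hy⟩ := kalikowPi_mem_wordCyl_iff.1 hq
  rw [← hy i, ← hy i']
  exact congrArg q.2 hii'

lemma measure_cyl_eq_ofReal_wordWeight {p : ℝ} (hp0 : 0 < p) (hp1 : p < 1) {Bp : Measure (ℤ → ℤ)}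
    (hBpcyl : ∀ (F : Finset ℤ) (a : ℤ → ℤ), (∀ j ∈ F, a j = 1 ∨ a j = -1) →
      Bp {w | ∀ j ∈ F, w j = a j} = ∏ j ∈ F, ENNReal.ofReal (if a j = 1 then p else 1 - p))
    {ε : Fin n → ℤ} (hε : ε ∈ signWords n) :
    Bp {w | ∀ i : Fin n, w i = ε i} = ENNReal.ofReal (wordWeight p ε) := by
  have hset : {w : ℤ → ℤ | ∀ i : Fin n, w i = ε i} =
      {w | ∀ j ∈ (Finset.range n).image (Nat.cast : ℕ → ℤ), w j = stepSeq ε j.toNat} := by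
    ext w
    simp +contextual [Fin.forall_iff, stepSeq]
  have hsigns : ∀ j ∈ (Finset.range n).image (Nat.cast : ℕ → ℤ),
      stepSeq ε j.toNat = 1 ∨ stepSeq ε j.toNat = -1 := by
    simp only [Finset.forall_mem_image, Finset.mem_range, Int.toNat_natCast]
    exact fun k hk => stepSeq_of_lt ε hk ▸ mem_signWords.1 hε _
  rw [hset, hBpcyl _ _ hsigns, Finset.prod_image fun _ _ _ _ h => Nat.cast_injective h,
    ← Fin.prod_univ_eq_prod_range, wordWeight,
    ENNReal.ofReal_prod_of_nonneg fun i _ => (stepWeight_pos hp0 hp1 _).le]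
  simp [stepSeq_of_lt, stepWeight]

lemma measure_forall_apply_eq_of_factorsThrough [Nonempty A] {Bh : Measure (ℤ → A)} {r : ENNReal}
    (hBhcyl : ∀ (F : Finset ℤ) (c : ℤ → A), Bh {y | ∀ j ∈ F, y j = c j} = r ^ F.card)
    {ι : Type*} [Fintype ι] (f : ι → ℤ) {b : ι → A} (hb : b.FactorsThrough f) :
    Bh {y | ∀ i, y (f i) = b i} = r ^ (Finset.univ.image f).card := by
  classical
  have hset : {y : ℤ → A | ∀ i, y (f i) = b i} = {y | ∀ s ∈ Finset.univ.image f,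
      y s = Function.extend f b (fun _ => Classical.arbitrary A) s} := by
    ext y
    simp [hb.extend_apply]
  rw [hset, hBhcyl]

lemma image_univ_fin_eq_image_range {β : Type*} [DecidableEq β] (S : ℕ → β) :
    Finset.univ.image (fun i : Fin n => S i) = (Finset.range n).image S := by
  ext
  simp [Fin.exists_iff]

lemma kalikowMeasure_wordCyl [MeasurableSingletonClass A] [Nonempty A] {p : ℝ} (hp0 : 0 < p)
    (hp1 : p < 1) {Bp : Measure (ℤ → ℤ)}
    (hBpcyl : ∀ (F : Finset ℤ) (a : ℤ → ℤ), (∀ j ∈ F, a j = 1 ∨ a j = -1) →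
      Bp {w | ∀ j ∈ F, w j = a j} = ∏ j ∈ F, ENNReal.ofReal (if a j = 1 then p else 1 - p))
    {Bh : Measure (ℤ → A)} [SFinite Bh] {r : ENNReal}
    (hBhcyl : ∀ (F : Finset ℤ) (c : ℤ → A), Bh {y | ∀ j ∈ F, y j = c j} = r ^ F.card)
    {ε : Fin n → ℤ} (hε : ε ∈ signWords n) {b : Fin n → A}
    (hb : b.FactorsThrough fun i : Fin n => wordWalk ε i) :
    kalikowMeasure Bp Bh (wordCyl fun i => (ε i, b i)) =
      ENNReal.ofReal (wordWeight p ε) * r ^ walkRange ε := by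
  have hpre : (fun q : (ℤ → ℤ) × (ℤ → A) => kalikowPi q.1 q.2) ⁻¹' wordCyl (fun i => (ε i, b i)) =
      {w | ∀ i : Fin n, w i = ε i} ×ˢ {y | ∀ i : Fin n, y (wordWalk ε i) = b i} := by
    ext q
    exact kalikowPi_mem_wordCyl_iff
  rw [kalikowMeasure_apply_wordCyl, hpre, Measure.prod_prod,
    measure_cyl_eq_ofReal_wordWeight hp0 hp1 hBpcyl hε,
    measure_forall_apply_eq_of_factorsThrough hBhcyl _ hb, image_univ_fin_eq_image_range, walkRange]

end KalikowMeasure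

lemma card_factorsThrough {ι β γ : Type*} [Fintype ι] [DecidableEq β] [Finite γ] (f : ι → β) :
    Nat.card {g : ι → γ // g.FactorsThrough f} = Nat.card γ ^ (Finset.univ.image f).card := by
  let e : {g : ι → γ // g.FactorsThrough f} ≃ (Set.range f → γ) :=
    { toFun := fun g s => g.1 s.2.choose
      invFun := fun c => ⟨fun i => c ⟨f i, i, rfl⟩, fun i j h => by simp only [h]⟩
      left_inv := fun g => Subtype.ext <| funext fun i =>
        g.2 (Set.mem_range_self (f := f) i).choose_spec
      right_inv := fun c => funext fun s => congrArg c (Subtype.ext s.2.choose_spec) }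
  rw [Nat.card_congr e, Nat.card_fun, Nat.card_eq_card_toFinset, Set.toFinset_range]

lemma two_pow_mul_negMulLog_mul_half_pow (q : ℝ) (R : ℕ) :
    2 ^ R * Real.negMulLog (q * (1 / 2) ^ R) = Real.negMulLog q + q * R * Real.log 2 := by
  have h2 : (2 : ℝ) ^ R * (1 / 2) ^ R = 1 := by rw [← mul_pow]; norm_num
  have hhalf : Real.negMulLog ((1 / 2 : ℝ) ^ R) = (1 / 2) ^ R * (R * Real.log 2) := by
    rw [Real.negMulLog, Real.log_pow, one_div, Real.log_inv]
    ring
  rw [Real.negMulLog_mul, hhalf]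
  linear_combination (Real.negMulLog q + q * R * Real.log 2) * h2

section Entropy

variable {p : ℝ} {n : ℕ}

lemma sum_negMulLog_wordWeight (hp0 : 0 < p) (hp1 : p < 1) :
    ∑ ε ∈ signWords n, Real.negMulLog (wordWeight p ε) = n * Real.binEntropy p := by
  have h : ∀ ε : Fin n → ℤ, Real.negMulLog (wordWeight p ε) =
      wordWeight p ε * ∑ i, -Real.log (stepWeight p (ε i)) := fun ε => by
    rw [Real.negMulLog, wordWeight, Real.log_prod fun i _ => (stepWeight_pos hp0 hp1 _).ne',
      Finset.sum_neg_distrib]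
    ring
  rw [Finset.sum_congr rfl fun ε _ => h ε]
  change wordExpect p n _ = _
  rw [wordExpect_sum, Finset.sum_congr rfl fun i _ =>
    wordExpect_apply i fun x => -Real.log (stepWeight p x)]
  simp [stepWeight, Real.binEntropy_eq_negMulLog_add_negMulLog_one_sub, Real.negMulLog]
  ring

variable {Bp : Measure (ℤ → ℤ)} {Bh : Measure (ℤ → Fin 2)} [SFinite Bh]

lemma sum_negMulLog_kalikowMeasure_fiber (hp0 : 0 < p) (hp1 : p < 1)
    (hBpcyl : ∀ (F : Finset ℤ) (a : ℤ → ℤ), (∀ j ∈ F, a j = 1 ∨ a j = -1) →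
      Bp {w | ∀ j ∈ F, w j = a j} = ∏ j ∈ F, ENNReal.ofReal (if a j = 1 then p else 1 - p))
    (hBhcyl : ∀ (F : Finset ℤ) (c : ℤ → Fin 2),
      Bh {y | ∀ j ∈ F, y j = c j} = (1 / 2 : ENNReal) ^ F.card)
    {ε : Fin n → ℤ} (hε : ε ∈ signWords n) :
    ∑ b : Fin n → Fin 2, Real.negMulLog (kalikowMeasure Bp Bh (wordCyl fun i => (ε i, b i))).toReal
      = Real.negMulLog (wordWeight p ε) + wordWeight p ε * walkRange ε * Real.log 2 := by
  classical
  have hterm : ∀ b : Fin n → Fin 2,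
      Real.negMulLog (kalikowMeasure Bp Bh (wordCyl fun i => (ε i, b i))).toReal =
        if b.FactorsThrough (fun i : Fin n => wordWalk ε i) then
          Real.negMulLog (wordWeight p ε * (1 / 2) ^ walkRange ε) else 0 := fun b => by
    split_ifs with hb
    · rw [kalikowMeasure_wordCyl hp0 hp1 hBpcyl hBhcyl hε hb, ENNReal.toReal_mul,
        ENNReal.toReal_ofReal (wordWeight_pos hp0 hp1 ε).le, ENNReal.toReal_pow]
      norm_num
    · rw [kalikowMeasure_wordCyl_of_not_factorsThrough Bp Bh hb]
      simp
  rw [Finset.sum_congr rfl fun b _ => hterm b, Finset.sum_ite, Finset.sum_const_zero, add_zero,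
    Finset.sum_const, nsmul_eq_mul, ← Fintype.card_subtype, ← Nat.card_eq_fintype_card,
    card_factorsThrough, image_univ_fin_eq_image_range, ← walkRange]
  simpa using two_pow_mul_negMulLog_mul_half_pow (wordWeight p ε) (walkRange ε)

lemma sum_negMulLog_kalikowMeasure_wordCyl (hp0 : 0 < p) (hp1 : p < 1)
    (hG : ∀ᵐ w ∂Bp, ∀ j : ℤ, w j = 1 ∨ w j = -1)
    (hBpcyl : ∀ (F : Finset ℤ) (a : ℤ → ℤ), (∀ j ∈ F, a j = 1 ∨ a j = -1) →
      Bp {w | ∀ j ∈ F, w j = a j} = ∏ j ∈ F, ENNReal.ofReal (if a j = 1 then p else 1 - p))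
    (hBhcyl : ∀ (F : Finset ℤ) (c : ℤ → Fin 2),
      Bh {y | ∀ j ∈ F, y j = c j} = (1 / 2 : ENNReal) ^ F.card) (n : ℕ) :
    ∑' a : Fin n → ℤ × Fin 2, Real.negMulLog (kalikowMeasure Bp Bh (wordCyl a)).toReal =
      n * Real.binEntropy p + expectedRange p n * Real.log 2 := by
  rw [← (Equiv.arrowProdEquivProdArrow (Fin n) (fun _ => ℤ) fun _ => Fin 2).symm.tsum_eq,
    tsum_eq_sum (s := signWords n ×ˢ Finset.univ) fun εb hεb => ?_, Finset.sum_product]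
  · refine (Finset.sum_congr rfl fun ε hε =>
      sum_negMulLog_kalikowMeasure_fiber hp0 hp1 hBpcyl hBhcyl hε).trans ?_
    rw [Finset.sum_add_distrib, sum_negMulLog_wordWeight hp0 hp1, expectedRange, wordExpect,
      Finset.sum_mul]
  · have hε : εb.1 ∉ signWords n := by simpa using hεb
    show Real.negMulLog (kalikowMeasure Bp Bh (wordCyl fun i => (εb.1 i, εb.2 i))).toReal = 0
    rw [kalikowMeasure_wordCyl_of_notMem_signWords Bh hG hε]
    simp

theorem tendsto_entropy_kalikowMeasure (hp0 : 0 < p) (hp1 : p < 1)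
    (hG : ∀ᵐ w ∂Bp, ∀ j : ℤ, w j = 1 ∨ w j = -1)
    (hBpcyl : ∀ (F : Finset ℤ) (a : ℤ → ℤ), (∀ j ∈ F, a j = 1 ∨ a j = -1) →
      Bp {w | ∀ j ∈ F, w j = a j} = ∏ j ∈ F, ENNReal.ofReal (if a j = 1 then p else 1 - p))
    (hBhcyl : ∀ (F : Finset ℤ) (c : ℤ → Fin 2),
      Bh {y | ∀ j ∈ F, y j = c j} = (1 / 2 : ENNReal) ^ F.card) :
    Tendsto (fun n : ℕ =>
        (∑' a : Fin n → ℤ × Fin 2, Real.negMulLog (kalikowMeasure Bp Bh (wordCyl a)).toReal) / n)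
      atTop (nhds (|2 * p - 1| * Real.log 2 + Real.binEntropy p)) := by
  refine (((tendsto_expectedRange_div hp0 hp1).mul_const (Real.log 2)).add_const
    (Real.binEntropy p)).congr' ?_
  filter_upwards [eventually_ne_atTop 0] with n hn
  rw [sum_negMulLog_kalikowMeasure_wordCyl hp0 hp1 hG hBpcyl hBhcyl n]
  field_simp
  ring

end Entropy

end

theorem kalikow_mu_p_entropy
    (p : ℝ) (hp0 : 0 < p) (hp1 : p < 1)
    (Bp : Measure (ℤ → ℤ)) (hBpP : IsProbabilityMeasure Bp)
    (hBpsupp : Bp {w | ∀ j : ℤ, w j = 1 ∨ w j = -1} = 1)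
    (hBpcyl : ∀ (F : Finset ℤ) (a : ℤ → ℤ), (∀ j ∈ F, a j = 1 ∨ a j = -1) →
      Bp {w | ∀ j ∈ F, w j = a j} =
        ∏ j ∈ F, ENNReal.ofReal (if a j = 1 then p else 1 - p))
    (Bh : Measure (ℤ → Fin 2)) (hBhP : IsProbabilityMeasure Bh)
    (hBhcyl : ∀ (F : Finset ℤ) (a : ℤ → Fin 2),
      Bh {y | ∀ j ∈ F, y j = a j} = (1 / 2 : ENNReal) ^ F.card) :
    Filter.Tendsto
      (fun n : ℕ =>
        (∑' a : Fin n → ℤ × Fin 2,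
          Real.negMulLog
            (((Bp.prod Bh).map fun q : (ℤ → ℤ) × (ℤ → Fin 2) => kalikowPi q.1 q.2)
              (wordCyl a)).toReal) / n)
      Filter.atTop
      (nhds (|2 * p - 1| * Real.log 2 +
        (-(p * Real.log p) - (1 - p) * Real.log (1 - p)))) := by
  have hG : ∀ᵐ w ∂Bp, ∀ j : ℤ, w j = 1 ∨ w j = -1 :=
    mem_ae_iff.2 ((prob_compl_eq_zero_iff (by measurability)).2 hBpsupp)
  have hH : -(p * Real.log p) - (1 - p) * Real.log (1 - p) = Real.binEntropy p := by
    simp [Real.binEntropy_eq_negMulLog_add_negMulLog_one_sub, Real.negMulLog]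
    ring
  rw [hH]
  exact tendsto_entropy_kalikowMeasure hp0 hp1 hG hBpcyl hBhcyl

end PaperStmt
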